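/- (Corollary 4) Let L be a finite-dimensional nilpotent left Leibniz algebra over a field k of characteristic 0. Then the minimal cardinality of a generating set of L equals dim_k(L/[L,L]): there is a generating set of this cardinality, and no generating set has smaller cardinality. -/

import Mathlib

/-
Basic notions for (left) Leibniz algebras, given by a bilinear bracket
`β : M →ₗ[k] M →ₗ[k] M` on a `k`-vector space `M`.
-/

section LeibnizDefs

variable {k : Type*} [Field k] {M : Type*} [AddCommGroup M] [Module k M]

/-- `[A, B]`: the linear span of brackets of elements of two subspaces. -/
def bracketSpan (β : M →ₗ[k] M →ₗ[k] M) (A B : Submodule k M) : Submodule k M :=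
  Submodule.span k {z : M | ∃ a ∈ A, ∃ b ∈ B, z = β a b}

/-- Derived series of a subspace `I`: `D^0 = I`, `D^{n+1} = [D^n, D^n]`. -/
def derivedSeriesOf (β : M →ₗ[k] M →ₗ[k] M) (I : Submodule k M) : ℕ → Submodule k M
  | 0 => I
  | n + 1 => bracketSpan β (derivedSeriesOf β I n) (derivedSeriesOf β I n)

/-- Lower central series of a subspace `I`: `C^0 = I`, `C^{n+1} = [I, C^n]`. -/
def lowerCentralSeriesOf (β : M →ₗ[k] M →ₗ[k] M) (I : Submodule k M) : ℕ → Submodule k M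
  | 0 => I
  | n + 1 => bracketSpan β I (lowerCentralSeriesOf β I n)

/-- A two-sided ideal. -/
def LeibnizIdeal (β : M →ₗ[k] M →ₗ[k] M) (I : Submodule k M) : Prop :=
  (∀ x : M, ∀ u ∈ I, β x u ∈ I) ∧ (∀ u ∈ I, ∀ x : M, β u x ∈ I)

/-- A subspace is solvable if its derived series reaches `0`. -/
def LeibnizSolvable (β : M →ₗ[k] M →ₗ[k] M) (I : Submodule k M) : Prop :=
  ∃ n, derivedSeriesOf β I n = ⊥

/-- A subspace is nilpotent if its lower central series reaches `0`. -/
def LeibnizNilpotent (β : M →ₗ[k] M →ₗ[k] M) (I : Submodule k M) : Prop :=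
  ∃ n, lowerCentralSeriesOf β I n = ⊥

/-- A subalgebra: a subspace closed under the bracket. -/
def LeibnizSubalgebra (β : M →ₗ[k] M →ₗ[k] M) (S : Submodule k M) : Prop :=
  ∀ u ∈ S, ∀ v ∈ S, β u v ∈ S

end LeibnizDefs

/-
Write `C^n` for `lowerCentralSeriesOf β ⊤ n`, so `C^1 = [L,L]`. The left Leibniz identity gives
`[C^a, C^b] ⊆ C^(a+b+1)`. Hence if a subalgebra `S` satisfies `L = S + [L,L]`, then
`L = S + C^(m+1)` implies `[L,L] ⊆ [S,S] + [S,C^(m+1)] + [C^(m+1),L] ⊆ S + C^(m+2)`, so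
`L = S + C^(m+2)`; by nilpotency `S = L`. A set thus generates `L` exactly when its image spans
`L/[L,L]` (every subspace containing `[L,L]` is a subalgebra), and the theorem becomes linear
algebra in `L/[L,L]`.
-/

open Module Cardinal

section LinearAlgebra

variable {k : Type*} [Field k] {M : Type*} [AddCommGroup M] [Module k M]

lemma exists_finset_card_eq_finrank_quotient_and_span_sup_eq_top [FiniteDimensional k M]
    (D : Submodule k M) :
    ∃ V : Finset M, V.card = finrank k (M ⧸ D) ∧ Submodule.span k (V : Set M) ⊔ D = ⊤ := by
  classical
  obtain ⟨C, hC⟩ := D.exists_isCompl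
  let b := Module.finBasis k C
  have hinj : Function.Injective (C.subtype ∘ b) := C.subtype_injective.comp b.injective
  refine ⟨Finset.univ.image (C.subtype ∘ b), ?_, ?_⟩
  · rw [Finset.card_image_of_injective _ hinj, Finset.card_univ, Fintype.card_fin,
      (Submodule.quotientEquivOfIsCompl D C hC).finrank_eq]
  · rw [Finset.coe_image, Finset.coe_univ, Set.image_univ, Set.range_comp,
      ← Submodule.map_span, b.span_eq, Submodule.map_top, Submodule.range_subtype]
    exact hC.symm.sup_eq_top

lemma finrank_quotient_le_mk_of_span_sup_eq_top [FiniteDimensional k M] {W : Set M}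
    {D : Submodule k M} (h : Submodule.span k W ⊔ D = ⊤) :
    (finrank k (M ⧸ D) : Cardinal) ≤ #W := by
  have hsurj : Function.Surjective (D.mkQ ∘ₗ (Submodule.span k W).subtype) := by
    rw [← LinearMap.range_eq_top, LinearMap.range_comp, Submodule.range_subtype,
      Submodule.map_mkQ_eq_top, sup_comm, h]
  calc (finrank k (M ⧸ D) : Cardinal) = Module.rank k (M ⧸ D) := finrank_eq_rank k _
    _ ≤ Module.rank k (Submodule.span k W) := LinearMap.rank_le_of_surjective _ hsurj
    _ ≤ #W := rank_span_le W

end LinearAlgebra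

section Leibniz

variable {k : Type*} [Field k] {M : Type*} [AddCommGroup M] [Module k M]
  (β : M →ₗ[k] M →ₗ[k] M)

lemma mem_bracketSpan {A B : Submodule k M} {a b : M} (ha : a ∈ A) (hb : b ∈ B) :
    β a b ∈ bracketSpan β A B :=
  Submodule.subset_span ⟨a, ha, b, hb, rfl⟩

lemma bracketSpan_le {A B C : Submodule k M} :
    bracketSpan β A B ≤ C ↔ ∀ a ∈ A, ∀ b ∈ B, β a b ∈ C := by
  refine ⟨fun h a ha b hb => h (mem_bracketSpan β ha hb), fun h => ?_⟩
  rw [bracketSpan, Submodule.span_le]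
  rintro _ ⟨a, ha, b, hb, rfl⟩
  exact h a ha b hb

lemma bracketSpan_span_le {s : Set M} {B C : Submodule k M}
    (h : ∀ a ∈ s, ∀ b ∈ B, β a b ∈ C) : bracketSpan β (Submodule.span k s) B ≤ C := by
  refine (bracketSpan_le β).2 fun a ha b hb => ?_
  have hspan : Submodule.span k s ≤ C.comap (β.flip b) :=
    Submodule.span_le.2 fun a ha => h a ha b hb
  exact hspan ha

lemma leibnizSubalgebra_of_bracketSpan_le {S : Submodule k M} (h : bracketSpan β ⊤ ⊤ ≤ S) :
    LeibnizSubalgebra β S :=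
  fun _ _ _ _ => h (mem_bracketSpan β trivial trivial)

lemma bracket_mem_lowerCentralSeriesOf_succ (x : M) {y : M} {n : ℕ}
    (hy : y ∈ lowerCentralSeriesOf β ⊤ n) : β x y ∈ lowerCentralSeriesOf β ⊤ (n + 1) :=
  mem_bracketSpan β trivial hy

lemma bracketSpan_lowerCentralSeriesOf_le
    (leib : ∀ x y z : M, β x (β y z) = β (β x y) z + β y (β x z)) (a b : ℕ) :
    bracketSpan β (lowerCentralSeriesOf β ⊤ a) (lowerCentralSeriesOf β ⊤ b) ≤
      lowerCentralSeriesOf β ⊤ (a + b + 1) := by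
  induction a generalizing b with
  | zero => rw [zero_add]; rfl
  | succ a ih =>
    refine bracketSpan_span_le β ?_
    rintro _ ⟨x, -, u, hu, rfl⟩ v hv
    rw [show β (β x u) v = β x (β u v) - β u (β x v) by rw [leib]; abel]
    refine sub_mem ?_ ?_
    · rw [show a + 1 + b + 1 = a + b + 1 + 1 by omega]
      exact bracket_mem_lowerCentralSeriesOf_succ β x (ih b (mem_bracketSpan β hu hv))
    · rw [show a + 1 + b + 1 = a + (b + 1) + 1 by omega]
      exact ih (b + 1) (mem_bracketSpan β hu (bracket_mem_lowerCentralSeriesOf_succ β x hv))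

lemma sup_lowerCentralSeriesOf_eq_top
    (leib : ∀ x y z : M, β x (β y z) = β (β x y) z + β y (β x z))
    {S : Submodule k M} (hS : LeibnizSubalgebra β S) (h : S ⊔ bracketSpan β ⊤ ⊤ = ⊤) (m : ℕ) :
    S ⊔ lowerCentralSeriesOf β ⊤ (m + 1) = ⊤ := by
  induction m with
  | zero => exact h
  | succ m ih =>
    have hbracket : bracketSpan β ⊤ ⊤ ≤ S ⊔ lowerCentralSeriesOf β ⊤ (m + 2) := by
      refine (bracketSpan_le β).2 fun a _ b _ => ?_
      obtain ⟨s, hs, u, hu, rfl⟩ := Submodule.mem_sup.1 (ih ▸ Submodule.mem_top : a ∈ _)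
      obtain ⟨t, ht, w, hw, rfl⟩ := Submodule.mem_sup.1 (ih ▸ Submodule.mem_top : b ∈ _)
      rw [show β (s + u) (t + w) = β s t + (β s w + β u (t + w)) by
        simp only [map_add, LinearMap.add_apply]; abel]
      refine add_mem (Submodule.mem_sup_left (hS s hs t ht)) (Submodule.mem_sup_right ?_)
      refine add_mem (bracket_mem_lowerCentralSeriesOf_succ β s hw) ?_
      exact bracketSpan_lowerCentralSeriesOf_le β leib (m + 1) 0 (mem_bracketSpan β hu trivial)
    exact top_le_iff.1 (h.symm.trans_le (sup_le le_sup_left hbracket))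

lemma eq_top_of_sup_bracketSpan_eq_top
    (leib : ∀ x y z : M, β x (β y z) = β (β x y) z + β y (β x z))
    (hnil : LeibnizNilpotent β ⊤) {S : Submodule k M} (hS : LeibnizSubalgebra β S)
    (h : S ⊔ bracketSpan β ⊤ ⊤ = ⊤) : S = ⊤ := by
  obtain ⟨n, hn⟩ := hnil
  cases n with
  | zero => exact top_le_iff.1 ((hn : (⊤ : Submodule k M) = ⊥).trans_le bot_le)
  | succ n => simpa [hn] using sup_lowerCentralSeriesOf_eq_top β leib hS h n

end Leibniz

theorem stmt_11_general {k : Type*} [Field k] {L : Type*} [AddCommGroup L] [Module k L]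
    [FiniteDimensional k L] (β : L →ₗ[k] L →ₗ[k] L)
    (leib : ∀ x y z : L, β x (β y z) = β (β x y) z + β y (β x z))
    (hnil : LeibnizNilpotent β (⊤ : Submodule k L)) :
    (∃ V : Finset L, V.card = Module.finrank k (L ⧸ bracketSpan β ⊤ ⊤) ∧
      ∀ S : Submodule k L, LeibnizSubalgebra β S → (V : Set L) ⊆ (S : Set L) → S = ⊤) ∧
    ∀ W : Set L, (∀ S : Submodule k L, LeibnizSubalgebra β S → W ⊆ (S : Set L) → S = ⊤) →
      (Module.finrank k (L ⧸ bracketSpan β ⊤ ⊤) : Cardinal) ≤ Cardinal.mk W := by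
  refine ⟨?_, fun W hW => ?_⟩
  · obtain ⟨V, hcard, hspan⟩ :=
      exists_finset_card_eq_finrank_quotient_and_span_sup_eq_top (bracketSpan β ⊤ ⊤)
    refine ⟨V, hcard, fun S hS hVS => eq_top_of_sup_bracketSpan_eq_top β leib hnil hS ?_⟩
    exact top_le_iff.1 (hspan.symm.trans_le (sup_le_sup_right (Submodule.span_le.2 hVS) _))
  · refine finrank_quotient_le_mk_of_span_sup_eq_top (hW _ ?_ ?_)
    · exact leibnizSubalgebra_of_bracketSpan_le β le_sup_right
    · exact fun x hx => Submodule.mem_sup_left (Submodule.subset_span hx)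

/-- The minimal number of generators of a nilpotent Leibniz algebra `L` is
`dim L/[L,L]`: some generating set has that cardinality, and no generating set is
smaller. -/
theorem stmt_11 {k : Type*} [Field k] [CharZero k] {L : Type*} [AddCommGroup L] [Module k L]
    [FiniteDimensional k L] (β : L →ₗ[k] L →ₗ[k] L)
    (leib : ∀ x y z : L, β x (β y z) = β (β x y) z + β y (β x z))
    (hnil : LeibnizNilpotent β (⊤ : Submodule k L)) :
    (∃ V : Finset L, V.card = Module.finrank k (L ⧸ bracketSpan β ⊤ ⊤) ∧
      ∀ S : Submodule k L, LeibnizSubalgebra β S → (V : Set L) ⊆ (S : Set L) → S = ⊤) ∧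
    ∀ W : Set L, (∀ S : Submodule k L, LeibnizSubalgebra β S → W ⊆ (S : Set L) → S = ⊤) →
      (Module.finrank k (L ⧸ bracketSpan β ⊤ ⊤) : Cardinal) ≤ Cardinal.mk W :=
  stmt_11_general β leib hnil
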